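/- The function t ↦ ⟨W⟩_t is strictly increasing on (0,∞), and V₀ ≤ ⟨W⟩_t ≤ W(t) ≤ V∞ for all t > 0. (Part (ii) of the lemma on the iteration class 𝒲.) -/

import Mathlib

/-!
The derivative of `t ↦ ⟨W⟩_t` is `(t W(t) - ∫₀ᵗ W) / t²`, so everything rests on the strict
inequality `∫₀ᵗ W < t W(t)`. For `t ≤ t₀` it holds because `W` is strictly increasing on
`[0, t]`; for `t > t₀` integrate the lower envelope `γ h ≤ V∞ - W` and use `⟨h⟩_t > g(t)`
together with the upper envelope `V∞ - W(t) < γ g(t)`. The lower bound `V₀ ≤ ⟨W⟩_t` is the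
limit `⟨W⟩_t → W(0) = V₀` as `t → 0⁺` of an increasing function, and `W ≤ V∞` because `h > 0`.
-/

open Set intervalIntegral Filter Topology

noncomputable def runningAvg (f : ℝ → ℝ) (t : ℝ) : ℝ := (1 / t) * ∫ τ in (0:ℝ)..t, f τ

section runningAvg

variable {f : ℝ → ℝ}

lemma runningAvg_eq_slope :
    runningAvg f = slope (fun t => ∫ τ in (0:ℝ)..t, f τ) 0 := by
  ext t
  simp [runningAvg, slope_def_field, div_eq_inv_mul]

lemma hasDerivAt_runningAvg (hf : Continuous f) {t : ℝ} (ht : t ≠ 0) :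
    HasDerivAt (runningAvg f) ((t * f t - ∫ τ in (0:ℝ)..t, f τ) / t ^ 2) t := by
  have hF := (hf.integral_hasStrictDerivAt 0 t).hasDerivAt
  have hAvg : runningAvg f = fun u => (∫ τ in (0:ℝ)..u, f τ) / u := by
    ext u; rw [runningAvg, one_div, inv_mul_eq_div]
  rw [hAvg]
  exact (hF.div (hasDerivAt_id' t) ht).congr_deriv (by ring)

lemma tendsto_runningAvg_nhdsGT_zero (hf : Continuous f) :
    Tendsto (runningAvg f) (𝓝[>] 0) (𝓝 (f 0)) := by
  rw [runningAvg_eq_slope]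
  exact (hasDerivWithinAt_iff_tendsto_slope' (lt_irrefl 0)).1
    (hf.integral_hasStrictDerivAt 0 0).hasDerivAt.hasDerivWithinAt

lemma strictMonoOn_runningAvg (hf : Continuous f)
    (hlt : ∀ t > 0, ∫ τ in (0:ℝ)..t, f τ < t * f t) :
    StrictMonoOn (runningAvg f) (Ioi 0) := by
  refine strictMonoOn_of_deriv_pos (convex_Ioi 0)
    (fun t ht => (hasDerivAt_runningAvg hf (ne_of_gt ht)).continuousAt.continuousWithinAt)
    fun t ht => ?_
  rw [interior_Ioi] at ht
  rw [(hasDerivAt_runningAvg hf (ne_of_gt ht)).deriv]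
  exact div_pos (sub_pos.2 (hlt t ht)) (pow_pos ht 2)

lemma apply_zero_le_runningAvg (hf : Continuous f)
    (hmono : MonotoneOn (runningAvg f) (Ioi 0)) {t : ℝ} (ht : 0 < t) :
    f 0 ≤ runningAvg f t := by
  refine le_of_tendsto (tendsto_runningAvg_nhdsGT_zero hf) ?_
  filter_upwards [Ioo_mem_nhdsGT ht] with s hs
  exact hmono hs.1 ht hs.2.le

lemma runningAvg_le_of_integral_le {t : ℝ} (ht : 0 < t)
    (hle : ∫ τ in (0:ℝ)..t, f τ ≤ t * f t) : runningAvg f t ≤ f t := by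
  rw [runningAvg, one_div, inv_mul_le_iff₀ ht]
  exact hle

end runningAvg

lemma integral_lt_mul_of_strictMonoOn {f : ℝ → ℝ} {a b : ℝ} (hab : a < b)
    (hf : ContinuousOn f (Icc a b)) (hmono : StrictMonoOn f (Icc a b)) :
    ∫ x in a..b, f x < (b - a) * f b := by
  have hb : b ∈ Icc a b := right_mem_Icc.2 hab.le
  calc ∫ x in a..b, f x < ∫ _ in a..b, f b :=
        integral_lt_integral_of_continuousOn_of_le_of_exists_lt hab hf continuousOn_const
          (fun x hx => hmono.monotoneOn (Ioc_subset_Icc_self hx) hb hx.2)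
          ⟨a, left_mem_Icc.2 hab.le, hmono (left_mem_Icc.2 hab.le) hb hab⟩
    _ = (b - a) * f b := by simp

lemma integral_lt_mul_of_envelope {V γ t : ℝ} {h g W : ℝ → ℝ} (hγ : 0 < γ) (ht : 0 < t)
    (hh : IntervalIntegrable h MeasureTheory.volume 0 t) (hW : Continuous W)
    (hlower : ∀ τ ∈ Icc 0 t, γ * h τ ≤ V - W τ) (hupper : V - W t < γ * g t)
    (havg : g t < runningAvg h t) :
    ∫ τ in (0:ℝ)..t, W τ < t * W t := by
  have hint : γ * ∫ τ in (0:ℝ)..t, h τ ≤ t * V - ∫ τ in (0:ℝ)..t, W τ := by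
    have := integral_mono_on ht.le (hh.const_mul γ)
      (intervalIntegrable_const.sub (hW.intervalIntegrable 0 t)) hlower
    rwa [integral_const_mul, integral_sub intervalIntegrable_const (hW.intervalIntegrable 0 t),
      integral_const, sub_zero, smul_eq_mul] at this
  have hg : t * g t < ∫ τ in (0:ℝ)..t, h τ := by
    rwa [runningAvg, one_div, lt_inv_mul_iff₀ ht] at havg
  calc ∫ τ in (0:ℝ)..t, W τ
      ≤ t * V - γ * ∫ τ in (0:ℝ)..t, h τ := by linarith
    _ < t * V - t * (γ * g t) := by linarith [mul_lt_mul_of_pos_left hg hγ]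
    _ < t * V - t * (V - W t) := by gcongr
    _ = t * W t := by ring

theorem iteration_class_avg_strictMono_and_bounds_general
    (Vinf γ t₀ : ℝ) (hγ : 0 < γ)
    (h g W : ℝ → ℝ)
    (hh_cont : ContinuousOn h (Ici 0))
    (hh_pos : ∀ t ≥ (0:ℝ), 0 < h t)
    (hW_lip : ∃ L : NNReal, LipschitzWith L W)
    (hW0 : W 0 = Vinf - γ)
    (hW_mono : StrictMonoOn W (Icc 0 t₀))
    (hW_env : ∀ t ≥ (0:ℝ), γ * h t ≤ Vinf - W t ∧ Vinf - W t < γ * g t)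
    (havg : ∀ t ≥ t₀, g t < (1 / t) * ∫ τ in (0:ℝ)..t, h τ) :
    StrictMonoOn (fun t => (1 / t) * ∫ τ in (0:ℝ)..t, W τ) (Ioi 0) ∧
    ∀ t > (0:ℝ),
      Vinf - γ ≤ (1 / t) * ∫ τ in (0:ℝ)..t, W τ ∧
      (1 / t) * ∫ τ in (0:ℝ)..t, W τ ≤ W t ∧
      W t ≤ Vinf := by
  obtain ⟨L, hL⟩ := hW_lip
  have hWc : Continuous W := hL.continuous
  have hlt : ∀ t > 0, ∫ τ in (0:ℝ)..t, W τ < t * W t := by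
    intro t ht
    rcases le_or_gt t t₀ with hle | hgt
    · simpa using integral_lt_mul_of_strictMonoOn ht hWc.continuousOn
        (hW_mono.mono (Icc_subset_Icc_right hle))
    · exact integral_lt_mul_of_envelope hγ ht
        ((hh_cont.mono Icc_subset_Ici_self).intervalIntegrable_of_Icc ht.le) hWc
        (fun τ hτ => (hW_env τ hτ.1).1) (hW_env t ht.le).2 (havg t hgt.le)
  have hmono := strictMonoOn_runningAvg hWc hlt
  refine ⟨hmono, fun t ht => ⟨?_, runningAvg_le_of_integral_le ht (hlt t ht).le, ?_⟩⟩
  · exact hW0 ▸ apply_zero_le_runningAvg hWc hmono.monotoneOn ht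
  · linarith [(hW_env t ht.le).1, mul_pos hγ (hh_pos t ht.le)]

/-- Part (ii) of the lemma on the iteration class 𝒲: the running average
`t ↦ ⟨W⟩_t = (1/t) ∫₀ᵗ W` is strictly increasing on `(0,∞)`, and
`V₀ ≤ ⟨W⟩_t ≤ W t ≤ V∞` for all `t > 0` (here `V₀ = V∞ - γ`). -/
theorem iteration_class_avg_strictMono_and_bounds
    (Vinf γ t₀ : ℝ) (hγ : 0 < γ) (ht₀ : 0 < t₀)
    (h g W : ℝ → ℝ)
    (hh_cont : ContinuousOn h (Ici 0)) (hg_cont : ContinuousOn g (Ici 0))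
    (hh_bdd : ∃ Ch, ∀ t ≥ (0:ℝ), |h t| ≤ Ch)
    (hg_bdd : ∃ Cg, ∀ t ≥ (0:ℝ), |g t| ≤ Cg)
    (hh_pos : ∀ t ≥ (0:ℝ), 0 < h t)
    (hW_lip : ∃ L : NNReal, LipschitzWith L W)
    (hW0 : W 0 = Vinf - γ)
    (hW_mono : StrictMonoOn W (Icc 0 t₀))
    (hW_env : ∀ t ≥ (0:ℝ), γ * h t ≤ Vinf - W t ∧ Vinf - W t < γ * g t)
    (havg : ∀ t ≥ t₀, g t < (1 / t) * ∫ τ in (0:ℝ)..t, h τ) :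
    StrictMonoOn (fun t => (1 / t) * ∫ τ in (0:ℝ)..t, W τ) (Ioi 0) ∧
    ∀ t > (0:ℝ),
      Vinf - γ ≤ (1 / t) * ∫ τ in (0:ℝ)..t, W τ ∧
      (1 / t) * ∫ τ in (0:ℝ)..t, W τ ≤ W t ∧
      W t ≤ Vinf :=
  iteration_class_avg_strictMono_and_bounds_general Vinf γ t₀ hγ h g W hh_cont hh_pos hW_lip hW0
    hW_mono hW_env havg
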